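/- If A ⊂ K^m is a μ^m measurable set and 1 ≤ k ≤ m, then for μ^m-almost all y ∈ A the set {x ∈ K^k : (x₁,…,x_k, y_{k+1},…,y_m) ∉ A} has μ^k density 0 at the point (y₁,…,y_k). -/

import Mathlib

/-!
For `R` in the value group, a closed ball of radius `R` in `K^k` has `μ^k`-measure `R^k`, so
`μ^k` is uniformly locally doubling and Lebesgue's density theorem holds in every `k`-dimensional
slice `{x | (x, z) ∈ A}`. Fubini transfers these slice statements to almost every point of `A`.
The set of good points is measurable once density is tested only along the radii `‖b‖ ^ n`
with `0 < ‖b‖ < 1`; this suffices because `R ↦ μ^k (S ∩ B(z, R))` is monotone and consecutive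
radii differ by the fixed factor `‖b‖`. A measurable kernel of `A` handles null measurable `A`.
-/

open MeasureTheory Metric Set Filter Topology Pointwise

/-- A set `S` has `ν` density `0` (in dimension `d`) at a point `z`, where the
radii run through the value group `Γ_K = {‖x‖ : x ∈ K, x ≠ 0}`. -/
def densityZeroAt (K : Type*) [NontriviallyNormedField K] {E : Type*}
    [SeminormedAddCommGroup E] [MeasurableSpace E] (ν : Measure E) (d : ℕ)
    (S : Set E) (z : E) : Prop :=
  Filter.Tendsto (fun R : ℝ => ν (S ∩ Metric.closedBall z R) / ENNReal.ofReal (R ^ d))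
    (𝓝[{R : ℝ | ∃ x : K, x ≠ 0 ∧ ‖x‖ = R}] 0) (𝓝 0)

open scoped ENNReal NNReal

section Density

variable {α : Type*} [PseudoMetricSpace α] [MeasurableSpace α] [BorelSpace α]
  [SecondCountableTopology α] {μ : Measure α} [IsUnifLocDoublingMeasure μ]
  [IsLocallyFiniteMeasure μ]

theorem IsUnifLocDoublingMeasure.ae_tendsto_measure_compl_inter_div {S : Set α}
    (hS : MeasurableSet S) :
    ∀ᵐ x ∂μ, x ∈ S →
      Tendsto (fun r => μ (Sᶜ ∩ closedBall x r) / μ (closedBall x r)) (𝓝[>] 0) (𝓝 0) := by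
  have h := IsUnifLocDoublingMeasure.ae_tendsto_measure_inter_div μ S 1
  rw [ae_restrict_iff' hS] at h
  filter_upwards [h] with x hx hxS
  have hS1 := hx hxS (fun _ => x) id tendsto_id
    (eventually_nhdsWithin_of_forall fun r (hr : 0 < r) => by simpa using hr.le)
  have hle : ∀ r, μ (Sᶜ ∩ closedBall x r) / μ (closedBall x r)
      ≤ 1 - μ (S ∩ closedBall x r) / μ (closedBall x r) := fun r => by
    have hsum : μ (Sᶜ ∩ closedBall x r) / μ (closedBall x r)
        + μ (S ∩ closedBall x r) / μ (closedBall x r) ≤ 1 := by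
      rw [ENNReal.div_add_div_same, ← sdiff_eq_compl_inter, inter_comm, add_comm,
        measure_inter_add_sdiff _ hS]
      exact ENNReal.div_self_le_one
    exact ENNReal.le_sub_of_add_le_right (ne_top_of_le_ne_top ENNReal.one_ne_top
      (le_of_add_le_right hsum)) hsum
  have hsub : Tendsto (fun r => 1 - μ (S ∩ closedBall x r) / μ (closedBall x r)) (𝓝[>] 0)
      (𝓝 0) := by
    simpa using ENNReal.Tendsto.sub tendsto_const_nhds hS1 (Or.inl ENNReal.one_ne_top)
  exact tendsto_of_tendsto_of_tendsto_of_le_of_le tendsto_const_nhds hsub (fun _ => zero_le) hle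

end Density

theorem tendsto_div_pow_nhdsGT_zero_of_tendsto_pow {f : ℝ → ℝ≥0∞} (hf : Monotone f)
    {q : ℝ} (hq0 : 0 < q) (hq1 : q < 1) {d : ℕ}
    (h : Tendsto (fun n : ℕ => f (q ^ n) / ENNReal.ofReal ((q ^ n) ^ d)) atTop (𝓝 0)) :
    Tendsto (fun R => f R / ENNReal.ofReal (R ^ d)) (𝓝[>] 0) (𝓝 0) := by
  rw [ENNReal.tendsto_nhds_zero] at h ⊢
  intro ε hε
  have hqd : ENNReal.ofReal (q ^ d) ≠ 0 := (ENNReal.ofReal_pos.2 (by positivity)).ne'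
  obtain ⟨N, hN⟩ := eventually_atTop.1 (h _ (ENNReal.mul_pos hε.ne' hqd))
  filter_upwards [Ioo_mem_nhdsGT (pow_pos hq0 N)] with R ⟨hR0, hRN⟩
  obtain ⟨n, hnR, hRn⟩ := exists_nat_pow_near_of_lt_one hR0
    (hRN.le.trans (pow_le_one₀ hq0.le hq1.le)) hq0 hq1
  have hNn : N ≤ n := by
    by_contra! hnN
    exact (hnR.trans hRN).not_ge (pow_le_pow_of_le_one hq0.le hq1.le hnN)
  have hsplit : ENNReal.ofReal ((q ^ (n + 1)) ^ d)
      = ENNReal.ofReal (q ^ d) * ENNReal.ofReal ((q ^ n) ^ d) := by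
    rw [← ENNReal.ofReal_mul (by positivity), ← mul_pow, pow_succ']
  have hn : f (q ^ n) ≤ ε * ENNReal.ofReal ((q ^ (n + 1)) ^ d) := by
    rw [hsplit, ← mul_assoc]
    exact (ENNReal.div_le_iff (ENNReal.ofReal_pos.2 (by positivity)).ne'
      ENNReal.ofReal_ne_top).1 (hN n hNn)
  calc f R / ENNReal.ofReal (R ^ d)
      ≤ f (q ^ n) / ENNReal.ofReal ((q ^ (n + 1)) ^ d) :=
        ENNReal.div_le_div (hf hRn) (ENNReal.ofReal_le_ofReal (by gcongr))
    _ ≤ ε := ENNReal.div_le_of_le_mul hn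

section DensityZeroAt

variable {K : Type*} [NontriviallyNormedField K] {E : Type*} [SeminormedAddCommGroup E]
  [MeasurableSpace E] {ν : Measure E} {d : ℕ} {S T : Set E} {z : E}

theorem densityZeroAt.mono (hST : S ⊆ T) (hT : densityZeroAt K ν d T z) :
    densityZeroAt K ν d S z :=
  tendsto_of_tendsto_of_tendsto_of_le_of_le tendsto_const_nhds hT (fun _ => zero_le)
    fun _ => ENNReal.div_le_div_right (measure_mono (inter_subset_inter_left _ hST)) _

theorem densityZeroAt_of_tendsto_pow {q : ℝ} (hq0 : 0 < q) (hq1 : q < 1)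
    (h : Tendsto (fun n : ℕ => ν (S ∩ closedBall z (q ^ n)) / ENNReal.ofReal ((q ^ n) ^ d))
      atTop (𝓝 0)) :
    densityZeroAt K ν d S z :=
  (tendsto_div_pow_nhdsGT_zero_of_tendsto_pow
    (fun _ _ hR => measure_mono (inter_subset_inter_right _ (closedBall_subset_closedBall hR)))
    hq0 hq1 h).mono_left (nhdsWithin_mono _ fun _ ⟨_, ha, haR⟩ => haR ▸ norm_pos_iff.2 ha)

end DensityZeroAt

section Balls

variable {K : Type*} [NontriviallyNormedField K]

theorem measure_closedBall_norm [MeasurableSpace K] [BorelSpace K] (μ : Measure K)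
    [μ.IsAddHaarMeasure] (hμ1 : μ (closedBall (0 : K) 1) = 1)
    (hμs : ∀ (a : K) (A : Set K), μ (a • A) = (‖a‖₊ : ℝ≥0∞) * μ A) (x a : K) :
    μ (closedBall x ‖a‖) = ‖a‖₊ := by
  have hball : closedBall (0 : K) ‖a‖ = a • closedBall 0 1 := by
    rw [_root_.smul_closedBall _ _ zero_le_one, smul_zero, mul_one]
  rw [Measure.addHaar_closedBall_center, hball, hμs, hμ1, mul_one]

theorem measure_pi_closedBall_norm [MeasurableSpace K] {μ : Measure K} [SigmaFinite μ]
    {ι : Type*} [Fintype ι]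
    (hμ : ∀ x a : K, μ (closedBall x ‖a‖) = ‖a‖₊) (x : ι → K) (a : K) :
    Measure.pi (fun _ : ι => μ) (closedBall x ‖a‖) = (‖a‖₊ : ℝ≥0∞) ^ Fintype.card ι := by
  simp [closedBall_pi x (norm_nonneg a), Measure.pi_pi, hμ]

theorem isUnifLocDoublingMeasure_of_measure_closedBall_norm {E : Type*} [PseudoMetricSpace E]
    [MeasurableSpace E] {ν : Measure E} {d : ℕ}
    (hν : ∀ (x : E) (a : K), ν (closedBall x ‖a‖) = (‖a‖₊ : ℝ≥0∞) ^ d) :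
    IsUnifLocDoublingMeasure ν := by
  obtain ⟨c, hc⟩ := NormedField.exists_lt_norm K 2
  refine ⟨⟨‖c ^ 2‖₊ ^ d, eventually_nhdsWithin_of_forall fun ε (hε : 0 < ε) x => ?_⟩⟩
  obtain ⟨n, hn, hn'⟩ := exists_mem_Ico_zpow hε (one_lt_two.trans hc)
  have hcn : 0 < ‖c‖ ^ n := zpow_pos (two_pos.trans hc) n
  have ha : ‖c ^ n‖ ≤ ε := by rwa [norm_zpow]
  have h2ε : 2 * ε ≤ ‖c ^ 2 * c ^ n‖ := by
    rw [zpow_add_one₀ (two_pos.trans hc).ne'] at hn'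
    rw [norm_mul, norm_pow, norm_zpow]
    nlinarith
  calc ν (closedBall x (2 * ε)) ≤ ν (closedBall x ‖c ^ 2 * c ^ n‖) :=
        measure_mono (closedBall_subset_closedBall h2ε)
    _ = (‖c ^ 2‖₊ ^ d : ℝ≥0) * ν (closedBall x ‖c ^ n‖) := by
        rw [hν, hν, nnnorm_mul, ENNReal.coe_mul, mul_pow, ENNReal.coe_pow]
    _ ≤ (‖c ^ 2‖₊ ^ d : ℝ≥0) * ν (closedBall x ε) := by
        gcongr

end Balls

theorem ae_tendsto_measure_compl_inter_closedBall_pow {K : Type*} [NontriviallyNormedField K]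
    [ProperSpace K] [MeasurableSpace K] [BorelSpace K] {μ : Measure K} [μ.IsAddHaarMeasure]
    (hμ : ∀ x a : K, μ (closedBall x ‖a‖) = ‖a‖₊) {k : ℕ} {b : K} (hb0 : 0 < ‖b‖)
    (hb1 : ‖b‖ < 1) {S : Set (Fin k → K)} (hS : MeasurableSet S) :
    ∀ᵐ x ∂Measure.pi (fun _ : Fin k => μ), x ∈ S →
      Tendsto (fun n : ℕ => Measure.pi (fun _ : Fin k => μ) (Sᶜ ∩ closedBall x (‖b‖ ^ n)) /
        ENNReal.ofReal ((‖b‖ ^ n) ^ k)) atTop (𝓝 0) := by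
  have hball (x : Fin k → K) (a : K) :
      Measure.pi (fun _ : Fin k => μ) (closedBall x ‖a‖) = (‖a‖₊ : ℝ≥0∞) ^ k := by
    simpa using measure_pi_closedBall_norm hμ x a
  have := isUnifLocDoublingMeasure_of_measure_closedBall_norm hball
  filter_upwards [IsUnifLocDoublingMeasure.ae_tendsto_measure_compl_inter_div hS]
    with x hx hxS
  refine ((hx hxS).comp (tendsto_pow_atTop_nhdsWithin_zero_of_lt_one hb0 hb1)).congr
    fun n => ?_
  rw [Function.comp_apply, ← norm_pow, hball, ENNReal.ofReal_pow (norm_nonneg _), ofReal_norm,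
    enorm_eq_nnnorm]

section Coordinates

variable {α : Type*} {k m : ℕ}

def replaceHead (x : Fin k → α) (y : Fin m → α) : Fin m → α :=
  fun i => if h : (i : ℕ) < k then x ⟨i, h⟩ else y i

theorem measurable_replaceHead [MeasurableSpace α] :
    Measurable fun p : (Fin m → α) × (Fin k → α) => replaceHead p.2 p.1 := by
  refine measurable_pi_lambda _ fun i => ?_
  by_cases h : (i : ℕ) < k
  · simpa [replaceHead, h] using measurable_snd.eval
  · simpa [replaceHead, h] using measurable_fst.eval

variable (α) [MeasurableSpace α]

def headTailEquiv (hkm : k ≤ m) :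
    (Fin m → α) ≃ᵐ (Fin k → α) × ({i : Fin m // ¬(i : ℕ) < k} → α) :=
  (MeasurableEquiv.piEquivPiSubtypeProd (fun _ => α) fun i : Fin m => (i : ℕ) < k).trans
    (MeasurableEquiv.prodCongr
      (MeasurableEquiv.arrowCongr' (Fin.castLEquiv hkm).symm (MeasurableEquiv.refl α))
      (MeasurableEquiv.refl _))

variable {α} (hkm : k ≤ m)

theorem headTailEquiv_symm_apply (x : Fin k → α) (z : {i : Fin m // ¬(i : ℕ) < k} → α)
    (i : Fin m) :
    (headTailEquiv α hkm).symm (x, z) i = if h : (i : ℕ) < k then x ⟨i, h⟩ else z ⟨i, h⟩ :=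
  rfl

theorem replaceHead_headTailEquiv_symm (u x : Fin k → α)
    (z : {i : Fin m // ¬(i : ℕ) < k} → α) :
    replaceHead u ((headTailEquiv α hkm).symm (x, z)) = (headTailEquiv α hkm).symm (u, z) := by
  funext i
  by_cases h : (i : ℕ) < k <;> simp [replaceHead, headTailEquiv_symm_apply, h]

theorem take_headTailEquiv_symm (x : Fin k → α) (z : {i : Fin m // ¬(i : ℕ) < k} → α) :
    Fin.take k hkm ((headTailEquiv α hkm).symm (x, z)) = x := by
  funext j
  simp [headTailEquiv_symm_apply]

theorem measurePreserving_headTailEquiv (μ : Measure α) [SigmaFinite μ] :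
    MeasurePreserving (headTailEquiv α hkm) (Measure.pi fun _ => μ)
      ((Measure.pi fun _ => μ).prod (Measure.pi fun _ => μ)) :=
  ((measurePreserving_arrowCongr' _ _ _ _ fun _ => MeasurePreserving.id μ).prod
    (MeasurePreserving.id _)).comp
    (measurePreserving_piEquivPiSubtypeProd (fun _ => μ) fun i : Fin m => (i : ℕ) < k)

end Coordinates

theorem measurable_measure_prodMk_left_inter_closedBall {β E : Type*} [MeasurableSpace β]
    [PseudoMetricSpace E] [MeasurableSpace E] [OpensMeasurableSpace E]
    [SecondCountableTopology E] (ν : Measure E) [SFinite ν] {T : Set (β × E)}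
    (hT : MeasurableSet T) {c : β → E} (hc : Measurable c) (R : ℝ) :
    Measurable fun y => ν (Prod.mk y ⁻¹' T ∩ closedBall (c y) R) :=
  measurable_measure_prodMk_left
    (hT.inter (measurableSet_le (measurable_snd.dist (hc.comp measurable_fst)) measurable_const))

theorem ae_tendsto_measure_replaceHead_compl {K : Type*} [NontriviallyNormedField K]
    [ProperSpace K] [MeasurableSpace K] [BorelSpace K] {μ : Measure K} [μ.IsAddHaarMeasure]
    (hμ : ∀ x a : K, μ (closedBall x ‖a‖) = ‖a‖₊) {k m : ℕ} (hkm : k ≤ m) {b : K}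
    (hb0 : 0 < ‖b‖) (hb1 : ‖b‖ < 1) {A : Set (Fin m → K)} (hA : MeasurableSet A) :
    ∀ᵐ y ∂Measure.pi (fun _ : Fin m => μ), y ∈ A →
      Tendsto (fun n : ℕ => Measure.pi (fun _ : Fin k => μ)
          ({x | replaceHead x y ∉ A} ∩ closedBall (Fin.take k hkm y) (‖b‖ ^ n)) /
        ENNReal.ofReal ((‖b‖ ^ n) ^ k)) atTop (𝓝 0) := by
  set e := headTailEquiv K hkm
  set good := {y : Fin m → K | y ∈ A →
    Tendsto (fun n : ℕ => Measure.pi (fun _ : Fin k => μ)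
        ({x | replaceHead x y ∉ A} ∩ closedBall (Fin.take k hkm y) (‖b‖ ^ n)) /
      ENNReal.ofReal ((‖b‖ ^ n) ^ k)) atTop (𝓝 0)}
  have hgood : MeasurableSet good :=
    measurableSet_setOfPred.2 <| (measurableSet_setOfPred.1 hA).imp <|
      measurableSet_setOfPred.1 <| measurableSet_tendsto _ fun n =>
        (measurable_measure_prodMk_left_inter_closedBall _
          (measurable_replaceHead hA.compl)
          (measurable_pi_lambda _ fun _ => measurable_pi_apply _) _).div_const _
  have hfibre (z : {i : Fin m // ¬(i : ℕ) < k} → K) :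
      ∀ᵐ x ∂Measure.pi (fun _ : Fin k => μ), e.symm (x, z) ∈ good := by
    have hS : MeasurableSet {x | e.symm (x, z) ∈ A} :=
      hA.preimage (e.symm.measurable.comp measurable_prodMk_right)
    filter_upwards [ae_tendsto_measure_compl_inter_closedBall_pow hμ hb0 hb1 hS] with x hx
    simp only [good, mem_ofPred_eq, e, replaceHead_headTailEquiv_symm, take_headTailEquiv_symm]
    exact hx
  have hprod : ∀ᵐ p ∂(Measure.pi fun _ : Fin k => μ).prod (Measure.pi fun _ => μ),
      e.symm p ∈ good := by
    have hgood' := e.symm.measurable hgood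
    exact (Measure.ae_prod_iff_ae_ae hgood').2
      ((Measure.ae_ae_comm (p := fun x z => e.symm (x, z) ∈ good) hgood').2 (ae_of_all _ hfibre))
  filter_upwards [(measurePreserving_headTailEquiv hkm μ).quasiMeasurePreserving.ae hprod]
    with y hy
  rwa [MeasurableEquiv.symm_apply_apply] at hy

theorem stmt7_general {K : Type*} [NontriviallyNormedField K]
    [LocallyCompactSpace K] [MeasurableSpace K] [BorelSpace K]
    (μ : Measure K) [μ.IsAddHaarMeasure]
    (hμ1 : μ (closedBall (0 : K) 1) = 1)
    (hμs : ∀ (a : K) (A : Set K), μ (a • A) = (‖a‖₊ : ENNReal) * μ A)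
    {m k : ℕ} (hkm : k ≤ m)
    (A : Set (Fin m → K))
    (hA : NullMeasurableSet A (Measure.pi fun _ : Fin m => μ)) :
    ∀ᵐ y ∂((Measure.pi fun _ : Fin m => μ).restrict A),
      densityZeroAt K (Measure.pi fun _ : Fin k => μ) k
        {x : Fin k → K |
          (fun i : Fin m => if h : (i : ℕ) < k then x ⟨(i : ℕ), h⟩ else y i) ∉ A}
        (fun j : Fin k => y (Fin.castLE hkm j)) := by
  have : ProperSpace K := .of_nontriviallyNormedField_of_weaklyLocallyCompactSpace K
  obtain ⟨b, hb0, hb1⟩ := NormedField.exists_norm_lt_one K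
  obtain ⟨A', hA'A, hA', hA'ae⟩ := hA.exists_measurable_subset_ae_eq
  rw [← Measure.restrict_congr_set hA'ae, ae_restrict_iff' hA']
  filter_upwards [ae_tendsto_measure_replaceHead_compl (measure_closedBall_norm μ hμ1 hμs) hkm
    hb0 hb1 hA'] with y hy hyA'
  exact (densityZeroAt_of_tendsto_pow hb0 hb1 (hy hyA')).mono fun x hx hx' => hx (hA'A hx')

/-- Corollary 14. If `A ⊆ K^m` is `μ^m` measurable and
`1 ≤ k ≤ m`, then for `μ^m`-almost all `y ∈ A` the set
`{x ∈ K^k : (x₁,…,x_k, y_{k+1},…,y_m) ∉ A}` has `μ^k` density `0` at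
`(y₁,…,y_k)`. -/
theorem stmt7 {K : Type*} [NontriviallyNormedField K] [IsUltrametricDist K]
    [LocallyCompactSpace K] [MeasurableSpace K] [BorelSpace K]
    (μ : Measure K) [μ.IsAddHaarMeasure]
    (hμ1 : μ (closedBall (0 : K) 1) = 1)
    (hμs : ∀ (a : K) (A : Set K), μ (a • A) = (‖a‖₊ : ENNReal) * μ A)
    {m k : ℕ} (hk1 : 1 ≤ k) (hkm : k ≤ m)
    (A : Set (Fin m → K))
    (hA : NullMeasurableSet A (Measure.pi fun _ : Fin m => μ)) :
    ∀ᵐ y ∂((Measure.pi fun _ : Fin m => μ).restrict A),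
      densityZeroAt K (Measure.pi fun _ : Fin k => μ) k
        {x : Fin k → K |
          (fun i : Fin m => if h : (i : ℕ) < k then x ⟨(i : ℕ), h⟩ else y i) ∉ A}
        (fun j : Fin k => y (Fin.castLE hkm j)) :=
  stmt7_general μ hμ1 hμs hkm A hA
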